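/- Let n be a natural number and write ℂⁿ for EuclideanSpace ℂ (Fin n), with star z denoting componentwise complex conjugation. Let g : ℂⁿ → ℂⁿ be holomorphic (Fréchet ℂ-differentiable everywhere) with the ℂ-linear derivative fderiv ℂ g z a linear isomorphism (bijective) at every point z, and define the antiholomorphic map σ : ℂⁿ → ℂⁿ by σ(z) = g(star z). Let ψ : ℂⁿ → ℝ be of class C² (ContDiff ℝ 2) and strictly plurisubharmonic in the Hessian sense: for every a ∈ ℂⁿ and every v ∈ ℂⁿ with v ≠ 0, the function t ↦ ψ(a + t • v) on ℂ has strictly positive Laplacian at 0. Then u = ψ ∘ σ is of class C² and is strictly plurisubharmonic in the same Hessian sense. -/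

import Mathlib

open Complex

/-- The Laplacian at `0` of a function `h : ℂ → ℝ`, computed from the second real
Fréchet derivative: `D²h(0)(1,1) + D²h(0)(i,i)`. -/
noncomputable def laplacianAtZero (h : ℂ → ℝ) : ℝ :=
  iteratedFDeriv ℝ 2 h 0 ![1, 1] + iteratedFDeriv ℝ 2 h 0 ![Complex.I, Complex.I]

/-- Componentwise complex conjugation on `ℂⁿ`. -/
def conjVec {n : ℕ} (z : EuclideanSpace ℂ (Fin n)) : EuclideanSpace ℂ (Fin n) :=
  WithLp.toLp 2 (fun i => starRingEnd ℂ (z i))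

/-!
On the complex line through `a` in direction `v`, `ψ ∘ σ` is `t ↦ ψ (h (conj t))` with
`h s = g (conj a + s • conj v)` holomorphic. Conjugating the variable does not change the
Laplacian. In the second-order chain rule for `ψ ∘ h` the term `Dψ (Δh)` vanishes because `h`
is harmonic, so the Laplacian of `ψ ∘ h` at `0` is that of `ψ` along the tangent line
`h 0 + t • h'(0)`; it is positive since `h'(0) = Dg (conj v) ≠ 0`.

That `ψ ∘ σ` is `C²` needs `g` to be `C²`: differentiating the Cauchy integral formula for the
directional derivatives of `g` under the integral sign, with the bound on `Dg` given by the
Schwarz lemma, shows that they are again holomorphic.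
-/

open Metric Real ComplexConjugate InnerProductSpace

section Holomorphic

variable {E F : Type*} [NormedAddCommGroup E] [NormedSpace ℂ E]
  [NormedAddCommGroup F] [NormedSpace ℂ F] {G : E → F}

theorem Differentiable.hasDerivAt_comp_add_smul (hG : Differentiable ℂ G) (z w : E) (t : ℂ) :
    HasDerivAt (fun s : ℂ => G (z + s • w)) (fderiv ℂ G (z + t • w) w) t := by
  have hline : HasDerivAt (fun s : ℂ => z + s • w) w t := by
    simpa using ((hasDerivAt_id t).smul_const w).const_add z
  exact (hG _).hasFDerivAt.comp_hasDerivAt t hline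

theorem Differentiable.fderiv_apply_eq_circleIntegral [CompleteSpace F]
    (hG : Differentiable ℂ G) (z w : E) :
    fderiv ℂ G z w = (2 * π * I)⁻¹ • ∮ ζ in C(0, 1), (1 / ζ ^ 2) • G (z + ζ • w) := by
  have hline : Differentiable ℂ fun s : ℂ => G (z + s • w) :=
    fun t => (hG.hasDerivAt_comp_add_smul z w t).differentiableAt
  have := hline.diffContOnCl.deriv_eq_smul_circleIntegral (c := 0) one_pos
  simp only [sub_zero, (hG.hasDerivAt_comp_add_smul z w 0).deriv, zero_smul, add_zero] at this
  rw [this, inv_smul_smul₀ (by simp [pi_ne_zero])]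

theorem norm_fderiv_le_of_forall_mem_ball_norm_le {y : E} {r M : ℝ}
    (hG : DifferentiableOn ℂ G (ball y r)) (hr : 0 < r) (hM : ∀ x ∈ ball y r, ‖G x‖ ≤ M) :
    ‖fderiv ℂ G y‖ ≤ 2 * M / r := by
  refine norm_fderiv_le_div_of_mapsTo_ball hG (fun x hx => ?_) hr
  rw [mem_closedBall, dist_eq_norm, two_mul]
  exact (norm_sub_le _ _).trans (add_le_add (hM x hx) (hM y (mem_ball_self hr)))

theorem Differentiable.differentiable_fderiv_apply [FiniteDimensional ℂ E]
    [FiniteDimensional ℂ F] (hG : Differentiable ℂ G) (w : E) :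
    Differentiable ℂ fun z => fderiv ℂ G z w := by
  intro z₀
  borelize E (E →L[ℂ] F)
  obtain ⟨M, hM⟩ := (isCompact_closedBall z₀ (2 + ‖w‖)).exists_bound_of_continuousOn
    hG.continuous.continuousOn
  have hbound : ∀ y ∈ ball z₀ (1 + ‖w‖), ‖fderiv ℂ G y‖ ≤ 2 * M := fun y hy => by
    have hball : ∀ x ∈ ball y 1, ‖G x‖ ≤ M := fun x hx => hM x <| by
      rw [mem_closedBall]
      linarith [dist_triangle x y z₀, mem_ball.mp hx, mem_ball.mp hy]
    simpa using norm_fderiv_le_of_forall_mem_ball_norm_le hG.differentiableOn one_pos hball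
  set m : ℝ → ℂ := circleMap 0 1
  set k : ℝ → ℂ := fun θ => I / m θ
  have hm_ne : ∀ θ, m θ ≠ 0 := fun θ => circleMap_ne_center one_ne_zero
  have hm_norm : ∀ θ, ‖m θ‖ = 1 := fun θ => by simp [m]
  have hk_norm : ∀ θ, ‖k θ‖ = 1 := fun θ => by simp [k, hm_norm]
  have hk_cont : Continuous k := continuous_const.div (continuous_circleMap 0 1) hm_ne
  have hline_cont : ∀ z, Continuous fun θ => z + m θ • w := fun z =>
    continuous_const.add ((continuous_circleMap 0 1).smul continuous_const)
  have hrep : (fun z => fderiv ℂ G z w) =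
      fun z => (2 * π * I)⁻¹ • ∫ θ in (0 : ℝ)..2 * π, k θ • G (z + m θ • w) := by
    funext z
    simp only [hG.fderiv_apply_eq_circleIntegral z w, circleIntegral, deriv_circleMap, smul_smul]
    congr 2 with θ
    field_simp [hm_ne θ]
    rfl
  have hderiv : HasFDerivAt (fun z => ∫ θ in (0 : ℝ)..2 * π, k θ • G (z + m θ • w))
      (∫ θ in (0 : ℝ)..2 * π, k θ • fderiv ℂ G (z₀ + m θ • w)) z₀ := by
    refine intervalIntegral.hasFDerivAt_integral_of_dominated_of_fderiv_le
      (bound := fun _ => 2 * M) (F := fun z θ => k θ • G (z + m θ • w))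
      (F' := fun z θ => k θ • fderiv ℂ G (z + m θ • w))
      (ball_mem_nhds z₀ one_pos) ?_ ?_ ?_ ?_ intervalIntegrable_const ?_
    · exact .of_forall fun z =>
        (hk_cont.smul (hG.continuous.comp (hline_cont z))).aestronglyMeasurable
    · exact (hk_cont.smul (hG.continuous.comp (hline_cont z₀))).intervalIntegrable _ _
    · exact (hk_cont.aestronglyMeasurable.smul
        ((measurable_fderiv ℂ G).comp (hline_cont z₀).measurable).aestronglyMeasurable)
    · refine .of_forall fun θ _ z hz => ?_
      rw [norm_smul, hk_norm, one_mul]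
      refine hbound _ ?_
      rw [mem_ball_iff_norm, show z + m θ • w - z₀ = (z - z₀) + m θ • w by abel]
      refine (norm_add_le _ _).trans_lt ?_
      rw [norm_smul, hm_norm, one_mul]
      linarith [mem_ball_iff_norm.mp hz]
    · exact .of_forall fun θ _ z _ =>
        ((hG _).hasFDerivAt.comp z ((hasFDerivAt_id z).add_const _)).const_smul (k θ)
  rw [hrep]
  exact (hderiv.const_smul _).differentiableAt

theorem Differentiable.contDiff_of_finiteDimensional [FiniteDimensional ℂ E]
    [FiniteDimensional ℂ F] (hG : Differentiable ℂ G) {n : ℕ∞} : ContDiff ℂ n G := by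
  suffices ∀ n : ℕ, ∀ G : E → F, Differentiable ℂ G → ContDiff ℂ n G from
    (contDiff_infty.mpr fun n => this n G hG).of_le (by exact_mod_cast le_top)
  intro n
  induction n with
  | zero => exact fun G hG => contDiff_zero.mpr hG.continuous
  | succ n ih =>
    exact fun G hG => contDiff_succ_iff_fderiv_apply.mpr
      ⟨hG, by simp, fun w => ih _ (hG.differentiable_fderiv_apply w)⟩

end Holomorphic

theorem iteratedFDeriv_two_comp_apply {𝕜 E F G : Type*} [NontriviallyNormedField 𝕜]
    [NormedAddCommGroup E] [NormedSpace 𝕜 E] [NormedAddCommGroup F] [NormedSpace 𝕜 F]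
    [NormedAddCommGroup G] [NormedSpace 𝕜 G] {ψ : F → G} {f : E → F}
    (hψ : ContDiff 𝕜 2 ψ) (hf : ContDiff 𝕜 2 f) (x v v' : E) :
    iteratedFDeriv 𝕜 2 (ψ ∘ f) x ![v, v'] =
      iteratedFDeriv 𝕜 2 ψ (f x) ![fderiv 𝕜 f x v, fderiv 𝕜 f x v'] +
        fderiv 𝕜 ψ (f x) (iteratedFDeriv 𝕜 2 f x ![v, v']) := by
  have hψ' := hψ.differentiable (by norm_num)
  have hf' := hf.differentiable (by norm_num)
  have hfirst : fderiv 𝕜 (ψ ∘ f) = fun y => (fderiv 𝕜 ψ (f y)).comp (fderiv 𝕜 f y) :=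
    funext fun y => fderiv_comp y (hψ' (f y)) (hf' y)
  have hDψ : HasFDerivAt (fun y => fderiv 𝕜 ψ (f y))
      ((fderiv 𝕜 (fderiv 𝕜 ψ) (f x)).comp (fderiv 𝕜 f x)) x :=
    ((hψ.fderiv_right le_rfl).differentiable one_ne_zero (f x)).hasFDerivAt.comp x
      (hf' x).hasFDerivAt
  have hDf : HasFDerivAt (fderiv 𝕜 f) (fderiv 𝕜 (fderiv 𝕜 f) x) x :=
    ((hf.fderiv_right le_rfl).differentiable one_ne_zero x).hasFDerivAt
  simp only [iteratedFDeriv_two_apply, Matrix.cons_val_zero, Matrix.cons_val_one,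
    hfirst, (hDψ.clm_comp hDf).fderiv]
  simp [add_comm]

theorem laplacianAtZero_comp_holomorphic {E : Type*} [NormedAddCommGroup E] [NormedSpace ℂ E]
    [CompleteSpace E] {ψ : E → ℝ} {h : ℂ → E} (hψ : ContDiff ℝ 2 ψ) (hh : Differentiable ℂ h) :
    laplacianAtZero (fun t => ψ (h t)) =
      iteratedFDeriv ℝ 2 ψ (h 0) ![deriv h 0, deriv h 0] +
        iteratedFDeriv ℝ 2 ψ (h 0) ![I • deriv h 0, I • deriv h 0] := by
  have hh₂ : ContDiff ℂ 2 h := hh.contDiff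
  have hharmonic : iteratedFDeriv ℝ 2 h 0 ![1, 1] + iteratedFDeriv ℝ 2 h 0 ![I, I] = 0 := by
    simpa [laplacian_eq_iteratedFDeriv_complexPlane] using
      hh₂.contDiffAt.harmonicAt.2.self_of_nhds
  have hD : ∀ e : ℂ, fderiv ℝ h 0 e = e • deriv h 0 := fun e => by
    rw [(hh 0).fderiv_restrictScalars ℝ, ContinuousLinearMap.coe_restrictScalars',
      fderiv_eq_smul_deriv]
  unfold laplacianAtZero
  rw [show (fun t => ψ (h t)) = ψ ∘ h from rfl,
    iteratedFDeriv_two_comp_apply hψ (hh₂.restrict_scalars ℝ),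
    iteratedFDeriv_two_comp_apply hψ (hh₂.restrict_scalars ℝ), hD, hD, one_smul,
    add_add_add_comm, ← (fderiv ℝ ψ (h 0)).map_add, hharmonic, map_zero, add_zero]

theorem laplacianAtZero_comp_conj {u : ℂ → ℝ} (hu : ContDiff ℝ 2 u) :
    laplacianAtZero (fun t => u (conj t)) = laplacianAtZero u := by
  have h := conjCLE.toContinuousLinearMap.iteratedFDeriv_comp_right hu 0 le_rfl
  have hconj : ∀ v : Fin 2 → ℂ, iteratedFDeriv ℝ 2 (fun t => u (conj t)) 0 v =
      iteratedFDeriv ℝ 2 u 0 (fun i => conj (v i)) := fun v => by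
    rw [show (fun t => u (conj t)) = u ∘ conjCLE.toContinuousLinearMap from rfl, h]
    simp
  unfold laplacianAtZero
  rw [hconj, hconj]
  simp [iteratedFDeriv_two_apply]

theorem laplacianAtZero_comp_holomorphic_eq_tangent {E : Type*} [NormedAddCommGroup E]
    [NormedSpace ℂ E] [CompleteSpace E] {ψ : E → ℝ} {h : ℂ → E} (hψ : ContDiff ℝ 2 ψ)
    (hh : Differentiable ℂ h) :
    laplacianAtZero (fun t => ψ (h t)) =
      laplacianAtZero (fun t => ψ (h 0 + t • deriv h 0)) := by
  have hline : Differentiable ℂ fun t : ℂ => h 0 + t • deriv h 0 := by fun_prop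
  rw [laplacianAtZero_comp_holomorphic hψ hh, laplacianAtZero_comp_holomorphic hψ hline]
  simp [deriv_smul_const]

section conjVec

variable {n : ℕ}

@[simp]
theorem conjVec_apply (z : EuclideanSpace ℂ (Fin n)) (i : Fin n) :
    conjVec z i = conj (z i) :=
  rfl

theorem conjVec_add_smul (a v : EuclideanSpace ℂ (Fin n)) (t : ℂ) :
    conjVec (a + t • v) = conjVec a + conj t • conjVec v := by
  ext i
  simp

theorem conjVec_conjVec (z : EuclideanSpace ℂ (Fin n)) : conjVec (conjVec z) = z := by
  ext i
  simp

theorem conjVec_ne_zero {v : EuclideanSpace ℂ (Fin n)} (hv : v ≠ 0) : conjVec v ≠ 0 := by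
  refine fun h0 => hv ?_
  rw [← conjVec_conjVec v, h0]
  ext i
  simp

theorem contDiff_conjVec {m : WithTop ℕ∞} : ContDiff ℝ m (conjVec (n := n)) :=
  (LinearIsometryEquiv.piLpCongrRight 2 fun _ : Fin n => conjLIE).contDiff

end conjVec

/-- If `ψ` is a `C²` strictly plurisubharmonic function (in the Hessian/Laplacian sense)
on `ℂⁿ` and `σ(z) = g(star z)` is antiholomorphic with invertible derivative (with `g`
holomorphic, `fderiv ℂ g z` bijective everywhere), then `ψ ∘ σ` is `C²` and strictly
plurisubharmonic. -/
theorem strictPsh_comp_antiholomorphic (n : ℕ)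
    (g : EuclideanSpace ℂ (Fin n) → EuclideanSpace ℂ (Fin n))
    (hg : ∀ z, DifferentiableAt ℂ g z)
    (hg' : ∀ z, Function.Bijective (fderiv ℂ g z))
    (σ : EuclideanSpace ℂ (Fin n) → EuclideanSpace ℂ (Fin n))
    (hσ : ∀ z, σ z = g (conjVec z))
    (ψ : EuclideanSpace ℂ (Fin n) → ℝ) (hψ : ContDiff ℝ 2 ψ)
    (hpsh : ∀ a : EuclideanSpace ℂ (Fin n), ∀ v : EuclideanSpace ℂ (Fin n), v ≠ 0 →
      0 < laplacianAtZero fun t : ℂ => ψ (a + t • v)) :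
    ContDiff ℝ 2 (ψ ∘ σ) ∧
      ∀ a : EuclideanSpace ℂ (Fin n), ∀ v : EuclideanSpace ℂ (Fin n), v ≠ 0 →
        0 < laplacianAtZero fun t : ℂ => (ψ ∘ σ) (a + t • v) := by
  have hg_diff : Differentiable ℂ g := hg
  have hσ_eq : σ = g ∘ conjVec := funext hσ
  refine ⟨hψ.comp (hσ_eq ▸ (hg_diff.contDiff_of_finiteDimensional.restrict_scalars ℝ).comp
    contDiff_conjVec), fun a v hv => ?_⟩
  set h : ℂ → EuclideanSpace ℂ (Fin n) := fun s => g (conjVec a + s • conjVec v)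
  have hh : Differentiable ℂ h := fun t =>
    (hg_diff.hasDerivAt_comp_add_smul _ _ t).differentiableAt
  have hh' : deriv h 0 ≠ 0 := by
    rw [(hg_diff.hasDerivAt_comp_add_smul _ _ 0).deriv, zero_smul, add_zero]
    exact (map_ne_zero_iff _ (hg' _).injective).mpr (conjVec_ne_zero hv)
  have hline : (fun t : ℂ => (ψ ∘ σ) (a + t • v)) = fun t => ψ (h (conj t)) := by
    funext t
    simp only [Function.comp_apply, hσ, conjVec_add_smul, h]
  rw [hline,
    laplacianAtZero_comp_conj (u := fun s => ψ (h s)) (hψ.comp (hh.contDiff.restrict_scalars ℝ)),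
    laplacianAtZero_comp_holomorphic_eq_tangent hψ hh]
  exact hpsh _ _ hh'
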